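/- (Combination rule) Let Y be a Banach space, M : ℕ^d → Y, and let I ⊆ ℕ^d be a finite downward closed set (k ∈ I and k' ≤ k componentwise imply k' ∈ I). Then S_I(M) = Σ_{k ∈ I} c_k M(k), where c_k := Σ_{e ∈ {0,1}^d : k+e ∈ I} (−1)^{|e|_1}. -/

import Mathlib

/-!
Each `Δ_j` keeps `M k` and, when `k j > 0`, subtracts `M (k - e_j)`; expanding the composition gives
`(Δ_mix M)(k) = ∑_{s ⊆ supp k} (-1)^|s| M(k - 𝟙_s)`. After exchanging the two sums, the
substitution `k ↦ k + 𝟙_s` maps `{k ∈ I | k + 𝟙_s ∈ I}` bijectively onto `{k ∈ I | 𝟙_s ≤ k}`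
because `I` is downward closed, and collecting the terms carrying `M k` yields `c_k`.
-/

/-- The `j`-th unidirectional difference operator:
`(Δ_j M)(k) = M(k) - M(k - e_j)` if `k j > 0`, and `(Δ_j M)(k) = M(k)` if `k j = 0`. -/
def diffOp {d : ℕ} {Y : Type*} [AddCommGroup Y] (j : Fin d) (M : (Fin d → ℕ) → Y) :
    (Fin d → ℕ) → Y :=
  fun k => if k j = 0 then M k else M k - M (Function.update k j (k j - 1))

/-- The mixed difference operator `Δ_mix = Δ_1 ∘ ⋯ ∘ Δ_d`. -/
def mixDiff {d : ℕ} {Y : Type*} [AddCommGroup Y] (M : (Fin d → ℕ) → Y) :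
    (Fin d → ℕ) → Y :=
  (List.finRange d).foldr (fun j F => diffOp j F) M

open Finset

theorem IsLowerSet.sum_filter_tsub_eq_sum_filter_add_mem {α Y : Type*} [AddCommMonoid α]
    [PartialOrder α] [CanonicallyOrderedAdd α] [Sub α] [OrderedSub α] [AddLeftReflectLE α]
    [DecidableRel (α := α) (· ≤ ·)] [DecidableEq α] [AddCommMonoid Y]
    {I : Finset α} (hI : IsLowerSet (I : Set α)) (v : α) (f : α → Y) :
    ∑ k ∈ I with v ≤ k, f (k - v) = ∑ k ∈ I with k + v ∈ I, f k := by
  refine sum_nbij' (· - v) (· + v) ?_ ?_ ?_ ?_ fun _ _ => rfl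
  · simp only [mem_filter]
    rintro k ⟨hk, hvk⟩
    exact ⟨hI tsub_le_self hk, by rwa [tsub_add_cancel_of_le hvk]⟩
  · simp only [mem_filter]
    rintro k ⟨-, hkv⟩
    exact ⟨hkv, le_add_self⟩
  · simp only [mem_filter]
    rintro k ⟨-, hvk⟩
    exact tsub_add_cancel_of_le hvk
  · intro k _
    exact add_tsub_cancel_right k v

section Indicator

variable {ι : Type*} [DecidableEq ι]

theorem tsub_indicator_insert (k : ι → ℕ) {j : ι} {s : Finset ι} (hj : j ∉ s) :
    k - (↑(insert j s) : Set ι).indicator 1 =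
      Function.update k j (k j - 1) - (s : Set ι).indicator 1 := by
  ext i
  by_cases hij : i = j
  · subst hij
    simp [hj]
  · simp [Set.indicator_apply, hij]

variable [Fintype ι]

theorem indicator_one_le_iff_subset (s : Finset ι) (k : ι → ℕ) :
    (s : Set ι).indicator 1 ≤ k ↔ s ⊆ ({i | k i ≠ 0} : Finset ι) := by
  simp only [Pi.le_def, Set.indicator_apply, mem_coe, Pi.one_apply, subset_iff, mem_filter,
    mem_univ, true_and]
  refine forall_congr' fun i => ?_
  split_ifs with hi <;> simp [hi, Nat.one_le_iff_ne_zero]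

theorem Fintype.sum_boolFun_eq_sum_finset {β : Type*} [AddCommMonoid β] (f : Finset ι → β) :
    ∑ e : ι → Bool, f {i | e i = true} = ∑ s, f s :=
  Fintype.sum_equiv
    ({ toFun e := {i | e i = true}
       invFun s i := decide (i ∈ s)
       left_inv e := by ext; simp
       right_inv s := by ext; simp } : (ι → Bool) ≃ Finset ι) _ _ fun _ => rfl

theorem sum_boolFun_ite_smul_eq_sum_filter {Y : Type*} [AddCommGroup Y] (k : ι → ℕ)
    (I : Finset (ι → ℕ)) (x : Y) :
    (∑ e : ι → Bool,
        if (fun j => k j + if e j then 1 else 0) ∈ I then (-1 : ℤ) ^ #{j | e j = true}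
        else 0) • x =
      ∑ s with k + ((s : Finset ι) : Set ι).indicator 1 ∈ I, (-1 : ℤ) ^ #s • x := by
  have hadd (e : ι → Bool) :
      (fun j => k j + if e j then 1 else 0) =
        k + (({i | e i = true} : Finset ι) : Set ι).indicator 1 := by
    ext j
    simp [Set.indicator_apply]
  simp only [hadd, sum_smul, ite_smul, zero_smul, sum_filter]
  exact Fintype.sum_boolFun_eq_sum_finset fun s : Finset ι =>
    if k + (s : Set ι).indicator 1 ∈ I then (-1 : ℤ) ^ #s • x else 0

end Indicator

section MixedDifference

variable {d : ℕ} {Y : Type*} [AddCommGroup Y]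

theorem foldr_diffOp_apply (M : (Fin d → ℕ) → Y) {l : List (Fin d)} (hl : l.Nodup)
    (k : Fin d → ℕ) :
    l.foldr (fun j F => diffOp j F) M k =
      ∑ s ∈ {i ∈ l.toFinset | k i ≠ 0}.powerset,
        (-1 : ℤ) ^ #s • M (k - (s : Set (Fin d)).indicator 1) := by
  induction l generalizing k with
  | nil =>
    simp only [List.foldr_nil, List.toFinset_nil, filter_empty, powerset_empty, sum_singleton,
      card_empty, pow_zero, one_smul, coe_empty, Set.indicator_empty', tsub_zero]
  | cons j t ih =>
    obtain ⟨hjt, ht⟩ := List.nodup_cons.mp hl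
    rw [List.foldr_cons, List.toFinset_cons, filter_insert]
    by_cases hkj : k j = 0
    · simp only [diffOp, hkj, if_true, ne_eq, not_true_eq_false, if_false, ih ht]
    · have hsupp : {i ∈ t.toFinset | Function.update k j (k j - 1) i ≠ 0} =
          {i ∈ t.toFinset | k i ≠ 0} :=
        filter_congr fun i hi => by
          rw [Function.update_of_ne (by rintro rfl; exact hjt (List.mem_toFinset.mp hi))]
      have hj : j ∉ {i ∈ t.toFinset | k i ≠ 0} :=
        fun h => hjt (List.mem_toFinset.mp (mem_filter.mp h).1)
      rw [if_pos hkj, sum_powerset_insert hj]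
      simp only [diffOp, if_neg hkj, ih ht, hsupp, sub_eq_add_neg, ← sum_neg_distrib]
      congr 1
      refine sum_congr rfl fun s hs => ?_
      have hjs : j ∉ s := fun h => hj (mem_powerset.mp hs h)
      rw [card_insert_of_notMem hjs, pow_succ, mul_neg_one, neg_smul, tsub_indicator_insert k hjs]

theorem mixDiff_apply (M : (Fin d → ℕ) → Y) (k : Fin d → ℕ) :
    mixDiff M k = ∑ s ∈ ({i | k i ≠ 0} : Finset (Fin d)).powerset,
        (-1 : ℤ) ^ #s • M (k - (s : Set (Fin d)).indicator 1) := by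
  rw [mixDiff, foldr_diffOp_apply M (List.nodup_finRange d), List.toFinset_finRange]

end MixedDifference

theorem smolyak_combination_rule_general
    {d : ℕ} {Y : Type*} [NormedAddCommGroup Y] (M : (Fin d → ℕ) → Y)
    (I : Finset (Fin d → ℕ))
    (hI : ∀ k ∈ I, ∀ k' : Fin d → ℕ, (∀ j, k' j ≤ k j) → k' ∈ I) :
    ∑ k ∈ I, mixDiff M k =
      ∑ k ∈ I,
        (∑ e : Fin d → Bool,
          if (fun j => k j + if e j then 1 else 0) ∈ I
          then (-1 : ℤ) ^ (Finset.univ.filter fun j => e j = true).card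
          else 0) • M k := by
  classical
  set ind : Finset (Fin d) → Fin d → ℕ := fun s => (s : Set (Fin d)).indicator 1
  have hlower : IsLowerSet (I : Set (Fin d → ℕ)) := fun k k' hk' hk => hI k hk k' hk'
  calc ∑ k ∈ I, mixDiff M k
      = ∑ k ∈ I, ∑ s ∈ ({i | k i ≠ 0} : Finset (Fin d)).powerset,
          (-1 : ℤ) ^ #s • M (k - ind s) :=
        sum_congr rfl fun k _ => mixDiff_apply M k
    _ = ∑ s, ∑ k ∈ I with ind s ≤ k, (-1 : ℤ) ^ #s • M (k - ind s) :=
        sum_comm' fun k s => by simp [indicator_one_le_iff_subset, ind, and_comm]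
    _ = ∑ s, ∑ k ∈ I with k + ind s ∈ I, (-1 : ℤ) ^ #s • M k :=
        sum_congr rfl fun s _ =>
          hlower.sum_filter_tsub_eq_sum_filter_add_mem (ind s) fun k => (-1 : ℤ) ^ #s • M k
    _ = ∑ k ∈ I, ∑ s with k + ind s ∈ I, (-1 : ℤ) ^ #s • M k :=
        sum_comm' fun s k => by simp [and_comm]
    _ = _ := sum_congr rfl fun k _ => (sum_boolFun_ite_smul_eq_sum_filter k I (M k)).symm

/-- combination rule: for a finite downward closed `I ⊆ ℕ^d`,
Smolyak's algorithm `S_I(M) = ∑_{k ∈ I} (Δ_mix M)(k)` equals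
`∑_{k ∈ I} c_k M(k)` with `c_k = ∑_{e ∈ {0,1}^d, k+e ∈ I} (-1)^{|e|₁}`. -/
theorem smolyak_combination_rule
    {d : ℕ} (hd : 1 ≤ d) {Y : Type*} [NormedAddCommGroup Y] [NormedSpace ℝ Y]
    [CompleteSpace Y] (M : (Fin d → ℕ) → Y)
    (I : Finset (Fin d → ℕ))
    (hI : ∀ k ∈ I, ∀ k' : Fin d → ℕ, (∀ j, k' j ≤ k j) → k' ∈ I) :
    ∑ k ∈ I, mixDiff M k =
      ∑ k ∈ I,
        (∑ e : Fin d → Bool,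
          if (fun j => k j + if e j then 1 else 0) ∈ I
          then (-1 : ℤ) ^ (Finset.univ.filter fun j => e j = true).card
          else 0) • M k :=
  smolyak_combination_rule_general M I hI
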